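/- arXiv:1503.07500 — 3 statements merged into one kernel-verified Lean document; each statement's English description precedes it below -/
import Mathlib

section
/- For every natural number n, the alternating binomial sum ∑_{l=0}^{n} C(n,l) · C(2l,l) · (−1/2)^l equals C(n, n/2)/2^n if n is even, and equals 0 if n is odd. -/
open Polynomial Finset

lemma aux1 (n : ℕ) : (((1:ℚ[X]) + X^2)^n).coeff n
    = if Even n then (n.choose (n/2) : ℚ) else 0 := by
  rw [add_comm, add_pow, finset_sum_coeff]
  rw [Finset.sum_congr rfl (g := fun k => if 2*k = n then (n.choose k : ℚ) else 0)
    (fun k _ => by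
      rw [one_pow, mul_one, ← pow_mul, ← Polynomial.C_eq_natCast, mul_comm,
        coeff_C_mul, coeff_X_pow]
      simp [eq_comm])]
  by_cases h : Even n
  · obtain ⟨m, hm⟩ := h
    rw [Finset.sum_eq_single m]
    · have h2 : (m+m)/2 = m := by omega
      simp [hm, two_mul, h2]
    · intro b hb hbm
      simp only [ite_eq_right_iff]
      intro h2; omega
    · intro hm'; simp at hm'; omega
  · rw [if_neg h, Finset.sum_eq_zero]
    intro k _
    simp only [ite_eq_right_iff]
    intro h2
    exact absurd ⟨k, by omega⟩ h

lemma aux2 (n : ℕ) : ∑ k ∈ Finset.range (n+1),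
      (n.choose k : ℚ) * ((2*k).choose k : ℚ) * (-1)^k * 2^(n-k)
    = (-1)^n * (if Even n then (n.choose (n/2) : ℚ) else 0) := by
  have hbase : (-((1:ℚ[X]) + X^2)) = (-((1+X)^2)) + 2*X := by ring
  have hpow : (-((1:ℚ[X]) + X^2))^n
      = ∑ k ∈ Finset.range (n+1), (-((1+X:ℚ[X])^2))^k * (2*X)^(n-k) * (n.choose k : ℚ[X]) := by
    rw [hbase, add_pow]
  have hc := congrArg (fun p => Polynomial.coeff p n) hpow
  rw [neg_pow, ← Polynomial.C_1, ← Polynomial.C_neg, ← Polynomial.C_pow, coeff_C_mul, Polynomial.C_1,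
    aux1, finset_sum_coeff] at hc
  rw [hc]
  apply Finset.sum_congr rfl
  intro k hk
  have hk' : k ≤ n := by simpa using Nat.lt_succ_iff.mp (Finset.mem_range.mp hk)
  have hterm : (-((1+X:ℚ[X])^2))^k * (2*X)^(n-k) * (n.choose k : ℚ[X])
      = Polynomial.C ((-1)^k * 2^(n-k) * (n.choose k : ℚ)) * ((1+X)^(2*k) * X^(n-k)) := by
    rw [← Polynomial.C_eq_natCast, neg_pow, mul_pow, pow_mul]
    simp only [map_mul, map_pow, map_neg, map_one, map_ofNat]
    ring
  rw [hterm, coeff_C_mul, Polynomial.coeff_mul_X_pow', if_pos (by omega : n-k ≤ n)]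
  have hnk : n - (n-k) = k := by omega
  rw [hnk, Polynomial.coeff_one_add_X_pow]
  ring

/-- The alternating binomial sum
`∑_{l=0}^{n} C(n,l) · C(2l,l) · (−1/2)^l` equals `C(n, n/2)/2^n` if `n` is even,
and `0` if `n` is odd. -/
theorem alternating_central_binomial_sum (n : ℕ) :
    (∑ l ∈ Finset.range (n + 1),
        (Nat.choose n l : ℚ) * (Nat.choose (2 * l) l : ℚ) * (-1/2 : ℚ) ^ l)
      = if Even n then (Nat.choose n (n / 2) : ℚ) / 2 ^ n else 0 := by
  have h2 : (2:ℚ)^n ≠ 0 := by positivity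
  have key : (∑ l ∈ Finset.range (n + 1),
        (Nat.choose n l : ℚ) * (Nat.choose (2 * l) l : ℚ) * (-1/2 : ℚ) ^ l)
      = (∑ l ∈ Finset.range (n+1),
          (n.choose l : ℚ) * ((2*l).choose l : ℚ) * (-1)^l * 2^(n-l)) / 2^n := by
    rw [Finset.sum_div]
    apply Finset.sum_congr rfl
    intro l hl
    have hl' : l ≤ n := by simpa using Nat.lt_succ_iff.mp (Finset.mem_range.mp hl)
    have hp : (2:ℚ)^(n-l) * 2^l = 2^n := by rw [← pow_add]; congr 1; omega
    have h2l : (2:ℚ)^l ≠ 0 := by positivity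
    rw [div_pow, eq_div_iff h2, ← hp]
    field_simp
  rw [key, aux2]
  by_cases he : Even n
  · rw [if_pos he, if_pos he, he.neg_one_pow, one_mul]
  · rw [if_neg he, if_neg he, mul_zero, zero_div]
end

section
/- For every rational μ with 0 < μ < 1 and every natural number n, one has (μ)_{2n} (1−μ)_{2n} (1/2)_n / (((2n)!)^2 n!) = (μ/2)_n ((1−μ)/2)_n ((1+μ)/2)_n (1−μ/2)_n / ((n!)^2 (1/2)_n n!); equivalently, the Hadamard product of 1F0(1/2; t^2) with 2F1(μ,1−μ;1;t) equals 4F3(μ/2,(1−μ)/2,(1+μ)/2,1−μ/2; 1,1,1/2; t^2). -/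
/-- The Pochhammer rising factorial `(a)_n = a(a+1)⋯(a+n−1)`. -/
noncomputable def poch (a : ℚ) (n : ℕ) : ℚ := Polynomial.eval a (ascPochhammer ℚ n)

lemma poch_succ (a : ℚ) (n : ℕ) : poch a (n + 1) = poch a n * (a + n) := by
  simp [poch, ascPochhammer_succ_right]

lemma poch_zero (a : ℚ) : poch a 0 = 1 := by simp [poch]

lemma poch_double (a : ℚ) (n : ℕ) :
    poch a (2 * n) = 4 ^ n * poch (a / 2) n * poch ((a + 1) / 2) n := by
  induction n with
  | zero => simp [poch]
  | succ n ih =>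
    have h2 : 2 * (n + 1) = (2 * n + 1) + 1 := by ring
    rw [h2, poch_succ, poch_succ, poch_succ, poch_succ, ih]
    push_cast
    ring

lemma poch_half_pos (n : ℕ) : 0 < poch (1/2) n :=
  ascPochhammer_pos n (1/2 : ℚ) (by norm_num)

lemma fact_double (n : ℕ) :
    ((Nat.factorial (2 * n) : ℚ)) = 4 ^ n * (Nat.factorial n : ℚ) * poch (1/2) n := by
  have h := poch_double 1 n
  have h1 : poch 1 (2 * n) = ((2 * n).factorial : ℚ) := by
    simp [poch, ascPochhammer_eval_one]
  have h2 : poch ((1:ℚ)/2) n = poch (1/2) n := rfl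
  have h3 : poch (((1:ℚ) + 1)/2) n = (n.factorial : ℚ) := by
    norm_num [poch, ascPochhammer_eval_one]
  rw [h1, h2, h3] at h
  linarith [h]

/-- For rational `0 < μ < 1` and every natural `n`,
`(μ)_{2n} (1−μ)_{2n} (1/2)_n / (((2n)!)^2 n!)
  = (μ/2)_n ((1−μ)/2)_n ((1+μ)/2)_n (1−μ/2)_n / ((n!)^2 (1/2)_n n!)`;
equivalently, the Hadamard product of `1F0(1/2; t²)` with `2F1(μ,1−μ;1;t)` equals
`4F3(μ/2,(1−μ)/2,(1+μ)/2,1−μ/2; 1,1,1/2; t²)`. -/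
theorem hadamard_even_selection (μ : ℚ) (hμ0 : 0 < μ) (hμ1 : μ < 1) (n : ℕ) :
    poch μ (2 * n) * poch (1 - μ) (2 * n) * poch (1/2) n
        / (((Nat.factorial (2 * n) : ℚ)) ^ 2 * (Nat.factorial n : ℚ))
      = poch (μ/2) n * poch ((1 - μ)/2) n * poch ((1 + μ)/2) n * poch (1 - μ/2) n
        / (((Nat.factorial n : ℚ)) ^ 2 * poch (1/2) n * (Nat.factorial n : ℚ)) := by
  have hf : (Nat.factorial n : ℚ) ≠ 0 := by positivity
  have hp : poch (1/2) n ≠ 0 := (poch_half_pos n).ne'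
  rw [poch_double μ n, poch_double (1 - μ) n, fact_double n]
  have e1 : ((μ : ℚ) + 1)/2 = (1 + μ)/2 := by ring
  have e2 : ((1 : ℚ) - μ + 1)/2 = 1 - μ/2 := by ring
  rw [e1, e2]
  field_simp
end

section
/- Under the substitution u ↦ −1/(4u(u+1)), X ↦ X(2u+1)^2/(16(u(u+1))^4), Y ↦ Y(2u+1)^3/(64(u(u+1))^6), the Weierstrass equation Y^2 = 4X^3 − g2(tu)(u(u−1))^2 X − g3(tu)(u(u−1))^3 is transformed into Y^2 = 4X^3 − g2(−t/(4u(u+1)))(u(u+1))^4 X − g3(−t/(4u(u+1)))(u(u+1))^6, for any rational functions g2, g3. -/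
/-!
With `v = -1/(4u(u+1))` and `k = (2u+1)/(4(u(u+1))²)` one has `v(v-1) = k²(u(u+1))²`, so the
substitution is the rescaling `(X, Y) ↦ (k²X, k³Y)` of a Weierstrass equation with coefficients
`(k⁴g₂, k⁶g₃)`, which multiplies the equation by `k⁶ ≠ 0`.
-/

theorem weierstrass_scale_iff {K : Type*} [Field K] {k : K} (hk : k ≠ 0) (a b X Y : K) :
    (k ^ 3 * Y) ^ 2 = 4 * (k ^ 2 * X) ^ 3 - k ^ 4 * a * (k ^ 2 * X) - k ^ 6 * b ↔
      Y ^ 2 = 4 * X ^ 3 - a * X - b := by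
  rw [show 4 * (k ^ 2 * X) ^ 3 - k ^ 4 * a * (k ^ 2 * X) - k ^ 6 * b
      = k ^ 6 * (4 * X ^ 3 - a * X - b) by ring, mul_pow, ← pow_mul]
  exact mul_right_inj' (pow_ne_zero 6 hk)

theorem neg_inv_mul_neg_inv_sub_one {K : Type*} [Field K] [CharZero K] {u : K}
    (hu : u ≠ 0) (hu1 : u + 1 ≠ 0) :
    (-1 / (4 * u * (u + 1))) * ((-1 / (4 * u * (u + 1))) - 1)
      = (2 * u + 1) ^ 2 / (16 * (u * (u + 1)) ^ 2) := by
  field_simp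
  ring

/-- Under `u ↦ −1/(4u(u+1))`, `X ↦ X(2u+1)²/(16(u(u+1))⁴)`,
`Y ↦ Y(2u+1)³/(64(u(u+1))⁶)`, the Weierstrass equation
`Y² = 4X³ − g2(tu)(u(u−1))² X − g3(tu)(u(u−1))³` is transformed into
`Y² = 4X³ − g2(−t/(4u(u+1)))(u(u+1))⁴ X − g3(−t/(4u(u+1)))(u(u+1))⁶`,
for any rational functions `g2, g3`. -/
theorem pure_twist_to_mixed_twist (g2 g3 : ℝ → ℝ) (t u X Y : ℝ)
    (hu : u ≠ 0) (hu1 : u + 1 ≠ 0) (hu2 : 2*u + 1 ≠ 0) :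
    ((Y * (2*u + 1)^3 / (64 * (u*(u + 1))^6)) ^ 2
        = 4 * (X * (2*u + 1)^2 / (16 * (u*(u + 1))^4)) ^ 3
          - g2 (t * (-1 / (4*u*(u + 1))))
              * ((-1 / (4*u*(u + 1))) * ((-1 / (4*u*(u + 1))) - 1)) ^ 2
              * (X * (2*u + 1)^2 / (16 * (u*(u + 1))^4))
          - g3 (t * (-1 / (4*u*(u + 1))))
              * ((-1 / (4*u*(u + 1))) * ((-1 / (4*u*(u + 1))) - 1)) ^ 3)
    ↔ (Y ^ 2 = 4 * X^3
        - g2 (-t / (4*u*(u + 1))) * (u*(u + 1))^4 * X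
        - g3 (-t / (4*u*(u + 1))) * (u*(u + 1))^6) := by
  have hk : (2*u + 1) / (4 * (u*(u + 1))^2) ≠ 0 := div_ne_zero hu2 (by positivity)
  have hX : X * (2*u + 1)^2 / (16 * (u*(u + 1))^4)
      = ((2*u + 1) / (4 * (u*(u + 1))^2))^2 * X := by
    rw [div_pow]; ring
  have hY : Y * (2*u + 1)^3 / (64 * (u*(u + 1))^6)
      = ((2*u + 1) / (4 * (u*(u + 1))^2))^3 * Y := by
    rw [div_pow]; ring
  have hv : (-1 / (4*u*(u + 1))) * ((-1 / (4*u*(u + 1))) - 1)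
      = ((2*u + 1) / (4 * (u*(u + 1))^2))^2 * (u*(u + 1))^2 := by
    rw [neg_inv_mul_neg_inv_sub_one hu hu1]
    field_simp
    ring
  rw [hX, hY, hv, show t * (-1 / (4*u*(u + 1))) = -t / (4*u*(u + 1)) by ring]
  convert weierstrass_scale_iff hk (g2 (-t / (4*u*(u + 1))) * (u*(u + 1))^4)
    (g3 (-t / (4*u*(u + 1))) * (u*(u + 1))^6) X Y using 3 <;> ring
end
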